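/- arXiv:math/9810024 — 4 statements merged into one kernel-verified Lean document; each statement's English description precedes it below -/
import Mathlib

section
/- If a tiling system T(𝒫) contains a point of least period 2, then it contains at least two fixed points of the shift. -/
/-- `x : ℤ → Fin K` is the color sequence of a tiling of `ℤ` by the prototiles `P`. -/
def IsTilingSeq {K : ℕ} (P : Fin K → Finset ℤ) (x : ℤ → Fin K) : Prop :=
  ∃ Tl : Set (ℤ × Fin K),
    (∀ i : ℤ, ∃! tk : ℤ × Fin K, tk ∈ Tl ∧ ∃ p ∈ P tk.2, i = tk.1 + p) ∧
    (∀ tk ∈ Tl, ∀ p ∈ P tk.2, x (tk.1 + p) = tk.2)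

lemma shift_two_mul {K : ℕ} (x : ℤ → Fin K) (hper : ∀ i, x (i + 2) = x i) :
    ∀ (n i : ℤ), x (i + 2 * n) = x i := by
  intro n
  induction n using Int.induction_on with
  | zero => simp
  | succ k ih =>
      intro i
      have h1 : i + 2 * ((k : ℤ) + 1) = (i + 2 * (k : ℤ)) + 2 := by ring
      rw [h1, hper, ih]
  | pred k ih =>
      intro i
      have h1 : i + 2 * (-(k : ℤ)) = (i + 2 * (-(k : ℤ) - 1)) + 2 := by ring
      have h2 := ih i
      rw [h1, hper] at h2
      exact h2

lemma const_tiling {K : ℕ} (P : Fin K → Finset ℤ)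
    (hmin : ∀ k, (0 : ℤ) ∈ P k) (x : ℤ → Fin K) (hx : IsTilingSeq P x)
    (hper : ∀ i, x (i + 2) = x i) (i₀ : ℤ) (hab : x (i₀ + 1) ≠ x i₀) :
    IsTilingSeq P (fun _ => x i₀) := by
  obtain ⟨Tl, huniq, hcol⟩ := hx
  set a := x i₀ with ha
  have hmul := shift_two_mul x hper
  have hval : ∀ i : ℤ, x i = x (i₀ + (i - i₀) % 2) := by
    intro i
    have h1 : i = (i₀ + (i - i₀) % 2) + 2 * ((i - i₀) / 2) := by
      have := Int.mul_ediv_add_emod (i - i₀) 2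
      omega
    conv_lhs => rw [h1]
    rw [hmul]
  have hchar : ∀ i : ℤ, x i = a ↔ (i - i₀) % 2 = 0 := by
    intro i
    rcases Int.emod_two_eq (i - i₀) with h | h
    · constructor
      · intro _; exact h
      · intro _; rw [hval i, h]; simp [ha]
    · constructor
      · intro hxa
        exfalso
        rw [hval i, h] at hxa
        exact hab hxa
      · intro h0; omega
  have hbase : ∀ t : ℤ, (t, a) ∈ Tl → (t - i₀) % 2 = 0 := by
    intro t ht
    have h := hcol (t, a) ht 0 (hmin a)
    simp only [add_zero] at h
    exact (hchar t).1 h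
  -- all elements of P a are even
  have hPeven : ∀ q ∈ P a, q % 2 = 0 := by
    intro q hq
    obtain ⟨⟨t, k⟩, ⟨htk, p, hp, hip⟩, _⟩ := huniq i₀
    have h1 := hcol (t, k) htk p hp
    have hk : k = a := by
      rw [ha, hip]
      exact h1.symm
    subst hk
    have hb := hbase t htk
    have h2 := hcol (t, a) htk q hq
    have h3 := (hchar (t + q)).1 h2
    omega
  refine ⟨{tk | tk.2 = a ∧ ((tk.1, a) ∈ Tl ∨ (tk.1 - 1, a) ∈ Tl)}, ?_, ?_⟩
  · intro i
    set ε := (i - i₀) % 2 with hε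
    have hε01 : ε = 0 ∨ ε = 1 := Int.emod_two_eq _
    obtain ⟨⟨t, k⟩, ⟨htk, p, hp, hip⟩, huq⟩ := huniq (i - ε)
    have h1 := hcol (t, k) htk p hp
    have hk : k = a := by
      have h2 : x (i - ε) = a := (hchar _).2 (by omega)
      rw [← hip] at h1
      exact h1.symm.trans h2
    subst hk
    refine ⟨(t + ε, a), ⟨⟨rfl, ?_⟩, p, hp, by omega⟩, ?_⟩
    · rcases hε01 with h0 | h0
      · left; rw [h0, add_zero]; exact htk
      · right
        have he : t + ε - 1 = t := by omega
        rw [he]; exact htk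
    · rintro ⟨s, c⟩ ⟨⟨hc, hdis⟩, q, hq, hiq⟩
      simp only at hc
      subst hc
      have hqe := hPeven q hq
      rcases hdis with hs | hs
      · have hb := hbase s hs
        have hε0 : ε = 0 := by omega
        have huq2 := huq (s, a) ⟨hs, q, hq, by omega⟩
        have hst : s = t := congrArg Prod.fst huq2
        have : s = t + ε := by omega
        rw [this]
      · have hb := hbase (s - 1) hs
        have hε0 : ε = 1 := by omega
        have huq2 := huq (s - 1, a) ⟨hs, q, hq, by omega⟩
        have hst : s - 1 = t := congrArg Prod.fst huq2
        have : s = t + ε := by omega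
        rw [this]
  · rintro ⟨t, c⟩ ⟨hc, -⟩ p hp
    simp only at hc ⊢
    exact hc.symm

/-- A tiling system containing a point of least period 2 contains at least two
fixed points of the shift (two distinct constant sequences). -/
theorem period_two_implies_two_fixed_points {K : ℕ} (P : Fin K → Finset ℤ)
    (hmin : ∀ k, 0 ∈ P k ∧ ∀ p ∈ P k, 0 ≤ p)
    (x : ℤ → Fin K) (hx : IsTilingSeq P x)
    (hper : ∀ i, x (i + 2) = x i) (hnotfix : ¬ ∀ i, x (i + 1) = x i) :
    ∃ a b : Fin K, a ≠ b ∧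
      IsTilingSeq P (fun _ => a) ∧ IsTilingSeq P (fun _ => b) := by
  push_neg at hnotfix
  obtain ⟨i₀, h⟩ := hnotfix
  have hmin' : ∀ k, (0 : ℤ) ∈ P k := fun k => (hmin k).1
  have h2 : x (i₀ + 1 + 1) ≠ x (i₀ + 1) := by
    have e : i₀ + 1 + 1 = i₀ + 2 := by ring
    rw [e, hper i₀]
    exact Ne.symm h
  exact ⟨x i₀, x (i₀ + 1), Ne.symm h,
    const_tiling P hmin' x hx hper i₀ h,
    const_tiling P hmin' x hx hper (i₀ + 1) h2⟩
end

section
/- Suppose the sequence x with x_{2i} = a and x_{2i+1} = b (a ≠ b) for all i arises from a tiling of ℤ by prototiles P_a and P_b. Then every element of P_a is even and every element of P_b is even. -/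
/-- If the 2-periodic sequence `...abab...` (`a` at even positions, `b` at odd
positions, `a ≠ b`) arises from a tiling, then the prototiles `P a` and `P b`
consist entirely of even integers. -/
theorem period_two_prototiles_even {K : ℕ} (P : Fin K → Finset ℤ)
    (hmin : ∀ k, 0 ∈ P k ∧ ∀ p ∈ P k, 0 ≤ p)
    (a b : Fin K) (hab : a ≠ b)
    (hx : IsTilingSeq P (fun i => if Even i then a else b)) :
    (∀ p ∈ P a, Even p) ∧ (∀ p ∈ P b, Even p) := by
  obtain ⟨Tl, hcover, hcolor⟩ := hx
  constructor
  · -- tile covering 0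
    obtain ⟨tk, ⟨htk, q, hq, h0⟩, -⟩ := hcover 0
    have hk : tk.2 = a := by
      have h := hcolor tk htk q hq
      rw [← h0] at h
      simpa using h.symm
    have ht : Even tk.1 := by
      have h := hcolor tk htk 0 (by rw [hk]; exact (hmin a).1)
      rw [add_zero, hk] at h
      by_contra hodd
      simp only [if_neg hodd] at h
      exact hab h.symm
    intro p hp
    have h := hcolor tk htk p (by rw [hk]; exact hp)
    rw [hk] at h
    have hev : Even (tk.1 + p) := by
      by_contra hodd
      simp only [if_neg hodd] at h
      exact hab h.symm
    have := Int.even_add.mp hev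
    tauto
  · -- tile covering 1
    obtain ⟨tk, ⟨htk, q, hq, h1⟩, -⟩ := hcover 1
    have hk : tk.2 = b := by
      have h := hcolor tk htk q hq
      rw [← h1] at h
      simpa [Int.even_iff] using h.symm
    have ht : ¬ Even tk.1 := by
      have h := hcolor tk htk 0 (by rw [hk]; exact (hmin b).1)
      rw [add_zero, hk] at h
      intro heven
      simp only [if_pos heven] at h
      exact hab h
    intro p hp
    have h := hcolor tk htk p (by rw [hk]; exact hp)
    rw [hk] at h
    have hodd : ¬ Even (tk.1 + p) := by
      intro heven
      simp only [if_pos heven] at h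
      exact hab h
    have := Int.even_add (m := tk.1) (n := p)
    tauto
end

section
/- If a tiling system contains a point of least period 3, then it contains a fixed point. -/
/-- A tiling system containing a point of least period 3 contains a fixed point
(a constant sequence). -/
theorem period_three_implies_fixed_point {K : ℕ} (P : Fin K → Finset ℤ)
    (hmin : ∀ k, 0 ∈ P k ∧ ∀ p ∈ P k, 0 ≤ p)
    (x : ℤ → Fin K) (hx : IsTilingSeq P x)
    (hper : ∀ i, x (i + 3) = x i) (hnotfix : ¬ ∀ i, x (i + 1) = x i) :
    ∃ a : Fin K, IsTilingSeq P (fun _ => a) := by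
  obtain ⟨Tl, hcov, hcol⟩ := hx
  -- full periodicity
  have hper3 : ∀ i m : ℤ, x (i + 3 * m) = x i := by
    intro i m
    induction m using Int.induction_on with
    | zero => simp
    | succ n ih =>
        rw [show i + 3 * ((n : ℤ) + 1) = (i + 3 * n) + 3 by ring, hper, ih]
    | pred n ih =>
        have h := hper (i + 3 * (-(n : ℤ) - 1))
        rw [show i + 3 * (-(n : ℤ) - 1) + 3 = i + 3 * (-(n : ℤ)) by ring] at h
        rw [← ih, ← h]
  have hxmod : ∀ j1 j2 : ℤ, j1 % 3 = j2 % 3 → x j1 = x j2 := by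
    intro j1 j2 h
    have hj : j1 = j2 + 3 * ((j1 - j2) / 3) := by omega
    rw [hj, hper3]
  -- find a residue whose color differs from both neighbors
  push_neg at hnotfix
  obtain ⟨i0, hi0⟩ := hnotfix
  obtain ⟨r, hr1, hr2⟩ : ∃ r : ℤ, x (r + 1) ≠ x r ∧ x (r + 2) ≠ x r := by
    by_cases h2 : x (i0 + 2) = x i0
    · refine ⟨i0 + 1, ?_, ?_⟩
      · rw [show i0 + 1 + 1 = i0 + 2 by ring, h2]
        exact fun h => hi0 h.symm
      · rw [show i0 + 1 + 2 = i0 + 3 by ring, hper]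
        exact fun h => hi0 h.symm
    · by_cases h1 : x (i0 + 2) = x (i0 + 1)
      · exact ⟨i0, hi0, by rw [h1]; exact hi0⟩
      · refine ⟨i0 + 2, ?_, ?_⟩
        · rw [show i0 + 2 + 1 = i0 + 3 by ring, hper]
          exact fun h => h2 h.symm
        · rw [show i0 + 2 + 2 = (i0 + 1) + 3 by ring, hper]
          exact fun h => h1 h.symm
  set a := x r with ha
  -- any point with the color a sits in the residue class of r
  have hresid : ∀ j : ℤ, x j = x r → (3 : ℤ) ∣ (j - r) := by
    intro j hj
    have h0 : x j = x (r + (j - r) % 3) := hxmod _ _ (by omega)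
    have hs : (j - r) % 3 = 0 ∨ (j - r) % 3 = 1 ∨ (j - r) % 3 = 2 := by omega
    rcases hs with h | h | h
    · omega
    · rw [h] at h0
      exact absurd (h0.symm.trans hj) hr1
    · rw [h] at h0
      exact absurd (h0.symm.trans hj) hr2
  -- basic facts about tiles whose basepoint is ≡ r (mod 3)
  have hbase : ∀ t k, (t, k) ∈ Tl → x t = k := by
    intro t k hm
    have := hcol (t, k) hm 0 (hmin k).1
    simpa using this
  have keyP : ∀ t : ℤ, ∀ k, (t, k) ∈ Tl → (3 : ℤ) ∣ (t - r) →
      k = a ∧ ∀ p ∈ P k, (3 : ℤ) ∣ p := by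
    intro t k hm hd
    have ht : x t = x r := hxmod _ _ (by omega)
    have hk : k = a := by rw [ha, ← ht, hbase t k hm]
    refine ⟨hk, fun p hp => ?_⟩
    have hxp : x (t + p) = k := hcol (t, k) hm p hp
    have : (3 : ℤ) ∣ (t + p - r) := hresid _ (by rw [hxp, hk])
    omega
  refine ⟨a, {v : ℤ × Fin K |
      ∃ t s : ℤ, (t, a) ∈ Tl ∧ (3 : ℤ) ∣ (t - r) ∧ 0 ≤ s ∧ s < 3 ∧ v = (t - r + s, a)},
      ?_, ?_⟩
  · intro i
    set s : ℤ := i % 3 with hsdef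
    set j : ℤ := i - s + r with hjdef
    obtain ⟨⟨t, k⟩, ⟨hmem, p, hp, hjp⟩, huniq⟩ := hcov j
    -- identify the color of the tile covering j
    have hxj : x j = x r := hxmod _ _ (by omega)
    have hxk : x j = k := by rw [hjp]; exact hcol (t, k) hmem p hp
    have hka : k = a := by rw [ha, ← hxj, hxk]
    have hxt : x t = k := hbase t k hmem
    have htd : (3 : ℤ) ∣ (t - r) := hresid t (by rw [hxt, ← hxk, hxj])
    have hpd : (3 : ℤ) ∣ p := (keyP t k hmem htd).2 p hp
    refine ⟨(t - r + s, a), ⟨⟨t, s, hka ▸ hmem, htd, by omega, by omega, rfl⟩,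
      p, hka ▸ hp, by omega⟩, ?_⟩
    rintro ⟨u, b⟩ ⟨⟨t', s', hmem', hd', hs0', hs3', hv'⟩, p', hp', hip'⟩
    obtain ⟨hu, hb⟩ : u = t' - r + s' ∧ b = a := Prod.mk.injEq .. ▸ hv'
    have hp'd : (3 : ℤ) ∣ p' := (keyP t' a hmem' hd').2 p' (hb ▸ hp')
    simp only at hip'
    have hs' : s' = s := by omega
    have hcover' : (t', a) ∈ Tl ∧ ∃ q ∈ P a, j = t' + q :=
      ⟨hmem', p', hb ▸ hp', by omega⟩
    have := huniq (t', a) hcover'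
    have ht' : t' = t := congrArg Prod.fst this
    have hk' : a = k := congrArg Prod.snd this
    rw [hu, hb, hs', ht']
  · rintro ⟨u, b⟩ ⟨t, s, hmem, hd, hs0, hs3, hv⟩ p hp
    have hb : b = a := (Prod.mk.injEq .. ▸ hv).2
    simpa using hb.symm
end

section
/- The tiling system T({0},{0,2}) (with colors R and B respectively) equals the renewal system generated by the words R, BRB, and BBBB. -/
namespace TilingRenewal

abbrev Pt : Fin 2 → Finset ℤ := fun k => if k = 0 then ({0} : Finset ℤ) else {0, 2}

/-- `tk` covers position `i`. -/
def Cov (tk : ℤ × Fin 2) (i : ℤ) : Prop := ∃ p ∈ Pt tk.2, i = tk.1 + p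

lemma zero_mem_Pt (k : Fin 2) : (0 : ℤ) ∈ Pt k := by fin_cases k <;> simp [Pt]

lemma two_mem_Pt : (2 : ℤ) ∈ Pt 1 := by simp [Pt]

lemma cov_self (a : ℤ) (k : Fin 2) : Cov (a, k) a :=
  ⟨0, zero_mem_Pt k, (add_zero a).symm⟩

lemma cov_two (a : ℤ) : Cov (a, 1) (a + 2) := ⟨2, two_mem_Pt, rfl⟩

lemma cov_cases {tk : ℤ × Fin 2} {i : ℤ} (h : Cov tk i) :
    (tk.2 = 0 ∧ i = tk.1) ∨ (tk.2 = 1 ∧ (i = tk.1 ∨ i = tk.1 + 2)) := by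
  obtain ⟨p, hp, hi⟩ := h
  obtain ⟨a, k⟩ := tk
  fin_cases k <;> simp [Pt] at hp ⊢ <;> omega

lemma cov_cases' {a : ℤ} {k : Fin 2} {i : ℤ} (h : Cov (a, k) i) :
    (k = 0 ∧ i = a) ∨ (k = 1 ∧ (i = a ∨ i = a + 2)) := by
  simpa using cov_cases h

section Forward

variable {x : ℤ → Fin 2} {Tl : Set (ℤ × Fin 2)}

/-- block start -/
def Start (Tl : Set (ℤ × Fin 2)) (s : ℤ) : Prop :=
  ((s, (0 : Fin 2)) ∈ Tl ∨ (s, (1 : Fin 2)) ∈ Tl) ∧ (s - 1, (1 : Fin 2)) ∉ Tl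

/-- block property -/
def PB (x : ℤ → Fin 2) (s L : ℤ) : Prop :=
  (L = 1 ∧ x s = 0) ∨
  (L = 3 ∧ x s = 1 ∧ x (s + 1) = 0 ∧ x (s + 2) = 1) ∨
  (L = 4 ∧ ∀ j : ℤ, 0 ≤ j → j < 4 → x (s + j) = 1)

variable (hE : ∀ i : ℤ, ∃! tk : ℤ × Fin 2, tk ∈ Tl ∧ Cov tk i)

include hE

lemma uniq {tk tk' : ℤ × Fin 2} {i : ℤ} (h : tk ∈ Tl) (h' : tk' ∈ Tl)
    (hc : Cov tk i) (hc' : Cov tk' i) : tk = tk' :=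
  ((hE i).unique ⟨h, hc⟩ ⟨h', hc'⟩)

lemma not01 {a : ℤ} (h0 : (a, (0 : Fin 2)) ∈ Tl) (h1 : (a, (1 : Fin 2)) ∈ Tl) : False := by
  have := uniq hE h0 h1 (cov_self a 0) (cov_self a 1)
  simp at this

lemma base_vs_gap {a b : ℤ} {k : Fin 2} (h1 : (a, k) ∈ Tl) (h2 : (b, (1 : Fin 2)) ∈ Tl)
    (hab : a = b + 2) : False := by
  have := uniq hE h1 h2 (cov_self a k) (hab ▸ cov_two b)
  have : a = b := congrArg Prod.fst this
  omega

lemma coverCases (i : ℤ) :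
    (i, (0 : Fin 2)) ∈ Tl ∨ (i, (1 : Fin 2)) ∈ Tl ∨ (i - 2, (1 : Fin 2)) ∈ Tl := by
  obtain ⟨tk, ⟨htk, hc⟩, -⟩ := hE i
  rcases cov_cases hc with ⟨h2, h1⟩ | ⟨h2, h1 | h1⟩
  · left
    have : tk = (i, (0 : Fin 2)) := by
      obtain ⟨a, k⟩ := tk; simp_all
    rwa [this] at htk
  · right; left
    have : tk = (i, (1 : Fin 2)) := by
      obtain ⟨a, k⟩ := tk; simp_all
    rwa [this] at htk
  · right; right
    have : tk = (i - 2, (1 : Fin 2)) := by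
      obtain ⟨a, k⟩ := tk
      simp only [Prod.mk.injEq]
      simp at h1 h2
      exact ⟨by omega, h2⟩
    rwa [this] at htk

variable (hC : ∀ tk ∈ Tl, ∀ p ∈ Pt tk.2, x (tk.1 + p) = tk.2)

include hC

omit hE in
lemma colR {a : ℤ} (h : (a, (0 : Fin 2)) ∈ Tl) : x a = 0 := by
  have := hC (a, 0) h 0 (zero_mem_Pt 0); simpa using this

omit hE in
lemma colB0 {a : ℤ} (h : (a, (1 : Fin 2)) ∈ Tl) : x a = 1 := by
  have := hC (a, 1) h 0 (zero_mem_Pt 1); simpa using this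

omit hE in
lemma colB2 {a : ℤ} (h : (a, (1 : Fin 2)) ∈ Tl) : x (a + 2) = 1 := by
  have := hC (a, 1) h 2 two_mem_Pt; simpa using this

lemma stepA {s : ℤ} (hs : Start Tl s) :
    ∃ L, 0 < L ∧ Start Tl (s + L) ∧ PB x s L := by
  obtain ⟨hcov, hnb⟩ := hs
  rcases hcov with h0 | h1
  · -- R block
    refine ⟨1, one_pos, ⟨?_, ?_⟩, Or.inl ⟨rfl, colR hC h0⟩⟩
    · rcases coverCases hE (s + 1) with h | h | h
      · exact Or.inl h
      · exact Or.inr h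
      · exact absurd (by rwa [show s + 1 - 2 = s - 1 by ring] at h) hnb
    · intro h
      rw [show s + 1 - 1 = s by ring] at h
      exact not01 hE h0 h
  · -- B at s
    rcases coverCases hE (s + 1) with h0' | h1' | h'
    · -- BRB block
      refine ⟨3, by norm_num, ⟨?_, ?_⟩, Or.inr (Or.inl
        ⟨rfl, colB0 hC h1, by simpa using colR hC h0', colB2 hC h1⟩)⟩
      · rcases coverCases hE (s + 3) with h | h | h
        · exact Or.inl h
        · exact Or.inr h
        · rw [show s + 3 - 2 = s + 1 by ring] at h
          exact absurd h0' fun h0'' => not01 hE h0'' h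
      · intro h
        rw [show s + 3 - 1 = s + 2 by ring] at h
        exact base_vs_gap hE h h1 rfl
    · -- BBBB block
      have c0 := colB0 hC h1
      have c1 := colB0 hC h1'
      have c2 := colB2 hC h1
      have c3 := colB2 hC h1'
      refine ⟨4, by norm_num, ⟨?_, ?_⟩, Or.inr (Or.inr ⟨rfl, ?_⟩)⟩
      · rcases coverCases hE (s + 4) with h | h | h
        · exact Or.inl h
        · exact Or.inr h
        · rw [show s + 4 - 2 = s + 2 by ring] at h
          exact (base_vs_gap hE h h1 rfl).elim
      · intro h
        rw [show s + 4 - 1 = s + 1 + 2 by ring] at h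
        exact base_vs_gap hE h h1' rfl
      · intro j hj0 hj4
        have : j = 0 ∨ j = 1 ∨ j = 2 ∨ j = 3 := by omega
        rcases this with rfl | rfl | rfl | rfl
        · simpa using c0
        · simpa using c1
        · simpa using c2
        · simpa [show s + 3 = s + 1 + 2 by ring] using c3
    · rw [show s + 1 - 2 = s - 1 by ring] at h'
      exact absurd h' hnb

lemma stepB {s : ℤ} (hs : Start Tl s) :
    ∃ L, 0 < L ∧ Start Tl (s - L) ∧ PB x (s - L) L := by
  obtain ⟨hcov, hnb⟩ := hs
  have hbase : ∀ b : ℤ, (b, (1 : Fin 2)) ∈ Tl → b = s - 2 → False := by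
    intro b hb hbs
    rcases hcov with h | h
    · exact base_vs_gap hE h hb (by omega)
    · exact base_vs_gap hE h hb (by omega)
  rcases coverCases hE (s - 1) with h0 | h1 | h'
  · -- R at s-1
    refine ⟨1, one_pos, ⟨Or.inl h0, ?_⟩, Or.inl ⟨rfl, by simpa using colR hC h0⟩⟩
    intro h
    exact hbase _ h (by ring)
  · exact absurd h1 hnb
  · -- B at s-3
    rw [show s - 1 - 2 = s - 3 by ring] at h'
    rcases coverCases hE (s - 2) with h0 | h1 | h''
    · -- BRB block at s-3
      refine ⟨3, by norm_num, ⟨Or.inr h', ?_⟩, Or.inr (Or.inl ⟨rfl, ?_, ?_, ?_⟩)⟩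
      · intro h
        rw [show s - 3 - 1 = s - 2 - 2 by ring] at h
        exact base_vs_gap hE h0 h (by ring)
      · exact colB0 hC h'
      · simpa [show s - 3 + 1 = s - 2 by ring] using colR hC h0
      · simpa [show s - 3 + 2 = s - 3 + 2 by ring, show (s-3) + 2 = s - 1 by ring]
          using colB2 hC h'
    · exact (hbase _ h1 rfl).elim
    · -- BBBB block at s-4
      rw [show s - 2 - 2 = s - 4 by ring] at h''
      have c0 := colB0 hC h''
      have c1 := colB0 hC h'
      have c2 := colB2 hC h''
      have c3 := colB2 hC h'
      refine ⟨4, by norm_num, ⟨Or.inr h'', ?_⟩, Or.inr (Or.inr ⟨rfl, ?_⟩)⟩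
      · intro h
        rw [show s - 4 - 1 = s - 3 - 2 by ring] at h
        exact base_vs_gap hE h' h (by ring)
      · intro j hj0 hj4
        have : j = 0 ∨ j = 1 ∨ j = 2 ∨ j = 3 := by omega
        rcases this with rfl | rfl | rfl | rfl
        · simpa using c0
        · simpa [show s - 4 + 1 = s - 3 by ring] using c1
        · simpa [show s - 4 + 2 = s - 4 + 2 by ring, show s - 4 + 2 = s - 2 by ring] using c2
        · simpa [show s - 4 + 3 = s - 3 + 2 by ring] using c3

omit hC in
lemma exStart : ∃ s, Start Tl s := by
  rcases coverCases hE 0 with h | h | h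
  · by_cases hb : ((-1 : ℤ), (1 : Fin 2)) ∈ Tl
    · refine ⟨-1, Or.inr hb, fun hh => ?_⟩
      exact base_vs_gap hE h (by rwa [show (-1 : ℤ) - 1 = -2 by norm_num] at hh) (by norm_num)
    · exact ⟨0, Or.inl h, by simpa using hb⟩
  · by_cases hb : ((-1 : ℤ), (1 : Fin 2)) ∈ Tl
    · refine ⟨-1, Or.inr hb, fun hh => ?_⟩
      exact base_vs_gap hE h (by rwa [show (-1 : ℤ) - 1 = -2 by norm_num] at hh) (by norm_num)
    · exact ⟨0, Or.inr h, by simpa using hb⟩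
  · by_cases hb : ((-3 : ℤ), (1 : Fin 2)) ∈ Tl
    · refine ⟨-3, Or.inr hb, fun hh => ?_⟩
      exact base_vs_gap hE h (by rwa [show (-3 : ℤ) - 1 = -4 by norm_num] at hh) (by norm_num)
    · refine ⟨-2, Or.inr (by rwa [show (0 : ℤ) - 2 = -2 by norm_num] at h), ?_⟩
      rw [show (-2 : ℤ) - 1 = -3 by norm_num]
      exact hb

/-- Forward direction: a tiling gives a renewal decomposition. -/
lemma forward :
    ∃ t : ℤ → ℤ, StrictMono t ∧ ∀ n : ℤ, PB x (t n) (t (n + 1) - t n) := by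
  classical
  obtain ⟨s₀, hs₀⟩ := exStart hE
  let nxt : {s : ℤ // Start Tl s} → {s : ℤ // Start Tl s} := fun u =>
    ⟨u.1 + (stepA hE hC u.2).choose, ((stepA hE hC u.2).choose_spec).2.1⟩
  let prv : {s : ℤ // Start Tl s} → {s : ℤ // Start Tl s} := fun u =>
    ⟨u.1 - (stepB hE hC u.2).choose, ((stepB hE hC u.2).choose_spec).2.1⟩
  have nxt_spec : ∀ u, ∃ L, 0 < L ∧ (nxt u).1 = u.1 + L ∧ PB x u.1 L := fun u =>
    ⟨(stepA hE hC u.2).choose, (stepA hE hC u.2).choose_spec.1, rfl,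
      (stepA hE hC u.2).choose_spec.2.2⟩
  have prv_spec : ∀ u, ∃ L, 0 < L ∧ (prv u).1 = u.1 - L ∧ PB x (prv u).1 L := fun u =>
    ⟨(stepB hE hC u.2).choose, (stepB hE hC u.2).choose_spec.1, rfl, by
      exact (stepB hE hC u.2).choose_spec.2.2⟩
  let u₀ : {s : ℤ // Start Tl s} := ⟨s₀, hs₀⟩
  let f : ℕ → {s : ℤ // Start Tl s} := fun k => nxt^[k] u₀
  let g : ℕ → {s : ℤ // Start Tl s} := fun k => prv^[k] u₀
  let t : ℤ → ℤ := fun n => if 0 ≤ n then (f n.toNat).1 else (g (-n).toNat).1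
  have consec : ∀ n : ℤ, ∃ L, 0 < L ∧ t (n + 1) = t n + L ∧ PB x (t n) L := by
    intro n
    rcases le_or_gt 0 n with hn | hn
    · have h1 : t n = (f n.toNat).1 := if_pos hn
      have h2 : t (n + 1) = (f (n.toNat + 1)).1 := by
        have : (n + 1).toNat = n.toNat + 1 := by omega
        simp only [t, if_pos (by omega : (0:ℤ) ≤ n + 1), this]
      obtain ⟨L, hL, hnx, hpb⟩ := nxt_spec (f n.toNat)
      refine ⟨L, hL, ?_, ?_⟩
      · rw [h1, h2]
        have : f (n.toNat + 1) = nxt (f n.toNat) := Function.iterate_succ_apply' nxt n.toNat u₀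
        rw [this, hnx]
      · rwa [h1]
    · set k : ℕ := (-(n + 1)).toNat with hk
      have h2 : t (n + 1) = (g k).1 := by
        rcases eq_or_lt_of_le (by omega : n + 1 ≤ 0) with he | hlt
        · have : k = 0 := by omega
          simp only [t, if_pos (le_of_eq he.symm), this]
          have : (n + 1).toNat = 0 := by omega
          rw [this]
          rfl
        · simp only [t, if_neg (by omega : ¬ (0:ℤ) ≤ n + 1)]
          rw [hk]
      have h1 : t n = (g (k + 1)).1 := by
        have hkk : (-n).toNat = k + 1 := by omega
        simp only [t, if_neg (by omega : ¬ (0:ℤ) ≤ n), hkk]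
      obtain ⟨L, hL, hpv, hpb⟩ := prv_spec (g k)
      have hgk : g (k + 1) = prv (g k) := Function.iterate_succ_apply' prv k u₀
      refine ⟨L, hL, ?_, ?_⟩
      · rw [h1, h2, hgk, hpv]; ring
      · rw [h1, hgk]; exact hpb
  refine ⟨t, strictMono_int_of_lt_succ fun n => ?_, fun n => ?_⟩
  · obtain ⟨L, hL, heq, -⟩ := consec n
    omega
  · obtain ⟨L, hL, heq, hpb⟩ := consec n
    have : t (n + 1) - t n = L := by omega
    rwa [this]

end Forward

section Backward

variable {x : ℤ → Fin 2} {t : ℤ → ℤ}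

lemma mono_add (hm : StrictMono t) (m : ℤ) : ∀ k : ℕ, t m + k ≤ t (m + k) := by
  intro k
  induction k with
  | zero => simp
  | succ k ih =>
    have h1 : t (m + k) < t (m + k + 1) := hm (by omega)
    have : ((k:ℤ) + 1) = (((k+1 : ℕ)):ℤ) := by push_cast; ring
    push_cast
    have h2 : m + ((k:ℤ) + 1) = m + k + 1 := by ring
    rw [h2]
    omega

lemma mono_sub (hm : StrictMono t) (m : ℤ) : ∀ k : ℕ, t (m - k) ≤ t m - k := by
  intro k
  induction k with
  | zero => simp
  | succ k ih =>
    have h1 : t (m - k - 1) < t (m - k) := hm (by omega)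
    push_cast
    have h2 : m - ((k:ℤ) + 1) = m - k - 1 := by ring
    rw [h2]
    omega

lemma exists_block (hm : StrictMono t) (i : ℤ) : ∃ n, t n ≤ i ∧ i < t (n + 1) := by
  have hbdd : ∃ b : ℤ, ∀ z : ℤ, t z ≤ i → z ≤ b := by
    refine ⟨max 0 (i - t 0), fun z hz => ?_⟩
    rcases le_or_gt z 0 with h | h
    · exact le_trans h (le_max_left _ _)
    · have := mono_add hm 0 z.toNat
      have hz' : ((z.toNat : ℤ)) = z := by omega
      rw [hz', zero_add] at this
      have : z ≤ i - t 0 := by omega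
      exact le_trans this (le_max_right _ _)
  have hinh : ∃ z : ℤ, t z ≤ i := by
    refine ⟨0 - ((t 0 - i).toNat : ℤ), ?_⟩
    have := mono_sub hm 0 (t 0 - i).toNat
    omega
  obtain ⟨n, hn, hmax⟩ := Int.exists_greatest_of_bdd hbdd hinh
  refine ⟨n, hn, ?_⟩
  by_contra hcon
  push_neg at hcon
  have := hmax (n + 1) hcon
  omega

end Backward


/-- The set of tiles determined by a renewal decomposition. -/
def Blk (t : ℤ → ℤ) : Set (ℤ × Fin 2) :=
  {tk | ∃ n : ℤ,
    (t (n + 1) - t n = 1 ∧ tk = (t n, 0)) ∨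
    (t (n + 1) - t n = 3 ∧ (tk = (t n, 1) ∨ tk = (t n + 1, 0))) ∨
    (t (n + 1) - t n = 4 ∧ (tk = (t n, 1) ∨ tk = (t n + 1, 1)))}

lemma backward (x : ℤ → Fin 2) (t : ℤ → ℤ) (hm : StrictMono t)
    (h : ∀ n : ℤ,
      (t (n + 1) - t n = 1 ∧ x (t n) = 0) ∨
      (t (n + 1) - t n = 3 ∧ x (t n) = 1 ∧ x (t n + 1) = 0 ∧ x (t n + 2) = 1) ∨
      (t (n + 1) - t n = 4 ∧ ∀ j : ℤ, 0 ≤ j → j < 4 → x (t n + j) = 1)) :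
    ∃ Tl : Set (ℤ × Fin 2),
      (∀ i : ℤ, ∃! tk : ℤ × Fin 2, tk ∈ Tl ∧ Cov tk i) ∧
      (∀ tk ∈ Tl, ∀ p ∈ Pt tk.2, x (tk.1 + p) = tk.2) := by
  have covrange : ∀ (n : ℤ) (tk : ℤ × Fin 2) (i : ℤ),
      ((t (n + 1) - t n = 1 ∧ tk = (t n, 0)) ∨
       (t (n + 1) - t n = 3 ∧ (tk = (t n, 1) ∨ tk = (t n + 1, 0))) ∨
       (t (n + 1) - t n = 4 ∧ (tk = (t n, 1) ∨ tk = (t n + 1, 1)))) →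
      Cov tk i → t n ≤ i ∧ i < t (n + 1) := by
    intro n tk i hmem hcov
    rcases hmem with ⟨hg, rfl⟩ | ⟨hg, rfl | rfl⟩ | ⟨hg, rfl | rfl⟩ <;>
      rcases cov_cases' hcov with ⟨hk, hi⟩ | ⟨hk, hi⟩ <;>
      first
        | exact absurd hk (by decide)
        | omega
  have pairwise : ∀ (i : ℤ) (tk tk' : ℤ × Fin 2), tk ∈ Blk t → tk' ∈ Blk t →
      Cov tk i → Cov tk' i → tk = tk' := by
    rintro i tk tk' ⟨n, hn⟩ ⟨m, hm2⟩ hc hc'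
    have r1 := covrange n tk i hn hc
    have r2 := covrange m tk' i hm2 hc'
    have hnm : n = m := by
      by_contra hne
      rcases lt_or_gt_of_ne hne with hlt | hlt
      · have : t (n + 1) ≤ t m := hm.monotone (by omega)
        omega
      · have : t (m + 1) ≤ t n := hm.monotone (by omega)
        omega
    subst hnm
    clear covrange r1 r2 h
    rcases hn with ⟨hg, rfl⟩ | ⟨hg, rfl | rfl⟩ | ⟨hg, rfl | rfl⟩ <;>
      rcases hm2 with ⟨hg', rfl⟩ | ⟨hg', rfl | rfl⟩ | ⟨hg', rfl | rfl⟩ <;>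
      rcases cov_cases' hc with ⟨hk, hi⟩ | ⟨hk, hi⟩ <;>
      rcases cov_cases' hc' with ⟨hk', hi'⟩ | ⟨hk', hi'⟩ <;>
      first
        | rfl
        | exact absurd hk (by decide)
        | exact absurd hk' (by decide)
        | (exfalso; omega)
  have exist : ∀ i : ℤ, ∃ tk, tk ∈ Blk t ∧ Cov tk i := by
    intro i
    obtain ⟨n, h1, h2⟩ := exists_block hm i
    rcases h n with ⟨hg, -⟩ | ⟨hg, -⟩ | ⟨hg, -⟩
    · exact ⟨(t n, 0), ⟨n, Or.inl ⟨hg, rfl⟩⟩, ⟨0, zero_mem_Pt 0, by omega⟩⟩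
    · have hd : i = t n ∨ i = t n + 1 ∨ i = t n + 2 := by omega
      rcases hd with heq | heq | heq
      · exact ⟨(t n, 1), ⟨n, Or.inr (Or.inl ⟨hg, Or.inl rfl⟩)⟩, ⟨0, zero_mem_Pt 1, by omega⟩⟩
      · exact ⟨(t n + 1, 0), ⟨n, Or.inr (Or.inl ⟨hg, Or.inr rfl⟩)⟩, ⟨0, zero_mem_Pt 0, by omega⟩⟩
      · exact ⟨(t n, 1), ⟨n, Or.inr (Or.inl ⟨hg, Or.inl rfl⟩)⟩, ⟨2, two_mem_Pt, by omega⟩⟩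
    · have hd : i = t n ∨ i = t n + 1 ∨ i = t n + 2 ∨ i = t n + 3 := by omega
      rcases hd with heq | heq | heq | heq
      · exact ⟨(t n, 1), ⟨n, Or.inr (Or.inr ⟨hg, Or.inl rfl⟩)⟩, ⟨0, zero_mem_Pt 1, by omega⟩⟩
      · exact ⟨(t n + 1, 1), ⟨n, Or.inr (Or.inr ⟨hg, Or.inr rfl⟩)⟩, ⟨0, zero_mem_Pt 1, by omega⟩⟩
      · exact ⟨(t n, 1), ⟨n, Or.inr (Or.inr ⟨hg, Or.inl rfl⟩)⟩, ⟨2, two_mem_Pt, by omega⟩⟩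
      · exact ⟨(t n + 1, 1), ⟨n, Or.inr (Or.inr ⟨hg, Or.inr rfl⟩)⟩, ⟨2, two_mem_Pt, by omega⟩⟩
  have colors : ∀ tk ∈ Blk t, ∀ p ∈ Pt tk.2, x (tk.1 + p) = tk.2 := by
    rintro tk ⟨n, hn⟩ p hp
    rcases hn with ⟨hg, rfl⟩ | ⟨hg, rfl | rfl⟩ | ⟨hg, rfl | rfl⟩
    · simp only [Pt] at hp
      simp at hp
      subst hp
      rcases h n with ⟨-, hx⟩ | ⟨hg', -⟩ | ⟨hg', -⟩
      · simpa using hx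
      · omega
      · omega
    · simp only [Pt] at hp
      simp at hp
      rcases h n with ⟨hg', -⟩ | ⟨-, hx0, hx1, hx2⟩ | ⟨hg', -⟩
      · omega
      · rcases hp with rfl | rfl
        · simpa using hx0
        · exact hx2
      · omega
    · simp only [Pt] at hp
      simp at hp
      subst hp
      rcases h n with ⟨hg', -⟩ | ⟨-, hx0, hx1, hx2⟩ | ⟨hg', -⟩
      · omega
      · simpa using hx1
      · omega
    · simp only [Pt] at hp
      simp at hp
      rcases h n with ⟨hg', -⟩ | ⟨hg', -⟩ | ⟨-, hall⟩
      · omega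
      · omega
      · rcases hp with rfl | rfl
        · simpa using hall 0 (by norm_num) (by norm_num)
        · simpa using hall 2 (by norm_num) (by norm_num)
    · simp only [Pt] at hp
      simp at hp
      rcases h n with ⟨hg', -⟩ | ⟨hg', -⟩ | ⟨-, hall⟩
      · omega
      · omega
      · rcases hp with rfl | rfl
        · simpa using hall 1 (by norm_num) (by norm_num)
        · have := hall 3 (by norm_num) (by norm_num)
          rw [show t n + 1 + 2 = t n + 3 by ring]
          simpa using this
  refine ⟨Blk t, fun i => ?_, colors⟩
  obtain ⟨tk, htk, hc⟩ := exist i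
  exact ⟨tk, ⟨htk, hc⟩, fun y hy => pairwise i y tk hy.1 htk hy.2 hc⟩

end TilingRenewal

open TilingRenewal in
/-- The tiling system of `{0}` (color `R = 0`) and `{0,2}` (color `B = 1`) is the
renewal system generated by the words `R`, `BRB`, `BBBB`: a sequence arises from a
tiling iff it is a bi-infinite indexed concatenation of these words, the cut points
being given by a strictly increasing `t : ℤ → ℤ`. -/
theorem tiling_R_B_gap_eq_renewal (x : ℤ → Fin 2) :
    IsTilingSeq (fun k : Fin 2 => if k = 0 then ({0} : Finset ℤ) else {0, 2}) x ↔
      ∃ t : ℤ → ℤ, StrictMono t ∧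
        ∀ n : ℤ,
          (t (n + 1) - t n = 1 ∧ x (t n) = 0) ∨
          (t (n + 1) - t n = 3 ∧ x (t n) = 1 ∧ x (t n + 1) = 0 ∧ x (t n + 2) = 1) ∨
          (t (n + 1) - t n = 4 ∧ ∀ j : ℤ, 0 ≤ j → j < 4 → x (t n + j) = 1) := by
  constructor
  · rintro ⟨Tl, hE, hC⟩
    have hE' : ∀ i : ℤ, ∃! tk : ℤ × Fin 2, tk ∈ Tl ∧ Cov tk i := hE
    have hC' : ∀ tk ∈ Tl, ∀ p ∈ Pt tk.2, x (tk.1 + p) = tk.2 := hC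
    obtain ⟨t, hmono, hpb⟩ := forward hE' hC'
    exact ⟨t, hmono, fun n => hpb n⟩
  · rintro ⟨t, hmono, h⟩
    obtain ⟨Tl, hE, hC⟩ := backward x t hmono h
    exact ⟨Tl, hE, hC⟩
end
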